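/- If n_1 ≥ 2 and n_2 ≥ 2 are integers, then the general position number of the Cartesian product of two complete graphs satisfies gp(K_{n_1} □ K_{n_2}) = n_1 + n_2 − 2. -/

import Mathlib

namespace SimpleGraph

variable {V : Type*}

/-- `S` is a general position set of `G`: no vertex of `S` lies on a geodesic
(shortest path) between two other vertices of `S`. -/
def IsGPSet (G : SimpleGraph V) (S : Set V) : Prop :=
  ∀ ⦃u v w : V⦄, u ∈ S → v ∈ S → w ∈ S → u ≠ v → u ≠ w → v ≠ w →
    ∀ p : G.Walk u v, p.IsPath → p.length = G.dist u v → w ∉ p.support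

/-- The general position number of `G`: the maximum cardinality of a general
position set of `G`. -/
noncomputable def gpNumber (G : SimpleGraph V) : ℕ :=
  sSup {n | ∃ S : Set V, G.IsGPSet S ∧ n = S.ncard}

/-- `ρ(G)`: the maximum number of vertices in a union of pairwise independent
complete subgraphs of `G`, where complete subgraphs `Q`, `Q'` are independent
if `d_G(u,u') ≥ 2` for every `u ∈ Q` and `u' ∈ Q'`. -/
noncomputable def rho (G : SimpleGraph V) : ℕ :=
  sSup {n | ∃ 𝒬 : Finset (Finset V),
    (∀ Q ∈ 𝒬, G.IsClique (Q : Set V)) ∧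
    (∀ Q ∈ 𝒬, ∀ Q' ∈ 𝒬, Q ≠ Q' → ∀ u ∈ Q, ∀ u' ∈ Q', 2 ≤ G.edist u u') ∧
    n = (⋃ Q ∈ 𝒬, (Q : Set V)).ncard}

/-- A graph is complete multipartite iff non-adjacency is transitive. -/
def IsCompleteMultipartiteGP (G : SimpleGraph V) : Prop := Transitive (¬G.Adj · ·)

/-- `η(G)`: the maximum order of an induced complete multipartite subgraph of
the complement of `G`. -/
noncomputable def eta (G : SimpleGraph V) : ℕ :=
  sSup {n | ∃ B : Set V, (Gᶜ.induce B).IsCompleteMultipartiteGP ∧ n = B.ncard}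

/-- An independent set of a graph. -/
def IsIndepSetGP (G : SimpleGraph V) (S : Set V) : Prop :=
  S.Pairwise fun u v => ¬ G.Adj u v

/-- The independence number `α(G)`. -/
noncomputable def indepNumGP (G : SimpleGraph V) : ℕ :=
  sSup {n | ∃ S : Set V, G.IsIndepSetGP S ∧ n = S.ncard}

end SimpleGraph

/-- The Kneser graph `K(n,k)`: vertices are the `k`-element subsets of an
`n`-element set, two vertices adjacent iff the corresponding sets are disjoint. -/
def kneserGraph (n k : ℕ) : SimpleGraph {s : Finset (Fin n) // s.card = k} where
  Adj a b := Disjoint a.1 b.1 ∧ a ≠ b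
  symm := by
    constructor
    rintro a b ⟨h1, h2⟩
    exact ⟨h1.symm, h2.symm⟩
  loopless := by
    constructor
    rintro a ⟨-, h⟩
    exact h rfl


/-!
Any two vertices of `K_m □ K_n` are at distance at most two, so a set is in general position
exactly when no three of its points form an "L": two points in a row and two in a column sharing
the corner point. In an L-free set every point with another point in its row is alone in its
column. Hence the points with a row-mate use distinct columns, the others use distinct rows, and
neither kind shares a row or a column with the other kind; this leaves at most `m + n - 2` points
when both kinds occur, and at most `m` or `n` otherwise. A row and a column without their common
point attain the bound.
-/

namespace SimpleGraph

variable {V : Type*}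

theorem Walk.dist_add_dist_of_mem_support {G : SimpleGraph V} {u v w : V} {p : G.Walk u v}
    (hp : p.length = G.dist u v) (hw : w ∈ p.support) :
    G.dist u w + G.dist w v = G.dist u v := by
  classical
  refine le_antisymm ?_ ((p.takeUntil w hw).reachable.dist_triangle_left v)
  calc G.dist u w + G.dist w v ≤ (p.takeUntil w hw).length + (p.dropUntil w hw).length :=
        add_le_add (dist_le _) (dist_le _)
    _ = G.dist u v := by rw [← Walk.length_append, Walk.take_spec, hp]

theorem gpNumber_eq_of_isGPSet {G : SimpleGraph V} {S : Set V} {k : ℕ}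
    (hS : G.IsGPSet S) (hk : S.ncard = k) (hmax : ∀ T, G.IsGPSet T → T.ncard ≤ k) :
    G.gpNumber = k :=
  IsGreatest.csSup_eq ⟨⟨S, hS, hk.symm⟩, by rintro _ ⟨T, hT, rfl⟩; exact hmax T hT⟩

abbrev rookGraph (α β : Type*) : SimpleGraph (α × β) :=
  (⊤ : SimpleGraph α) □ (⊤ : SimpleGraph β)

theorem rookGraph_dist {α β : Type*} [DecidableEq α] [DecidableEq β] (x y : α × β) :
    (rookGraph α β).dist x y =
      (if x.1 = y.1 then 0 else 1) + (if x.2 = y.2 then 0 else 1) := by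
  rw [SimpleGraph.dist, edist_boxProd, edist_top, edist_top]
  split_ifs <;> rfl

end SimpleGraph

/-- No point `(a, d)` of `S` is the corner of an "L" with arms `(a, b)` and `(c, d)` in `S`. -/
def Set.IsLFree {α β : Type*} (S : Set (α × β)) : Prop :=
  ∀ ⦃a c : α⦄ ⦃b d : β⦄, (a, b) ∈ S → (a, d) ∈ S → (c, d) ∈ S → b = d ∨ a = c

namespace Set.IsLFree

variable {α β : Type*} {S : Set (α × β)}

theorem eq_of_snd_eq (hS : S.IsLFree) {p q r : α × β} (hp : p ∈ S) (hq : q ∈ S)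
    (hr : r ∈ S) (hqp : q.1 = p.1) (hne : q ≠ p) (hrp : r.2 = p.2) : r = p := by
  obtain ⟨a, d⟩ := p; obtain ⟨a', b⟩ := q; obtain ⟨c, d'⟩ := r
  simp only at hqp hrp; subst hqp hrp
  rcases hS hq hp hr with h | h <;> simp_all

variable [Fintype α] [Fintype β]

theorem card_le {T : Finset (α × β)} (hT : (T : Set (α × β)).IsLFree)
    (hα : 2 ≤ Fintype.card α) (hβ : 2 ≤ Fintype.card β) :
    T.card ≤ Fintype.card α + Fintype.card β - 2 := by
  classical
  set A := T.filter fun p => ∃ q ∈ T, q.1 = p.1 ∧ q ≠ p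
  set B := T.filter fun p => ¬∃ q ∈ T, q.1 = p.1 ∧ q ≠ p
  have hA_col : ∀ p ∈ A, ∀ q ∈ T, q.2 = p.2 → q = p := fun p hp q hq hqp => by
    obtain ⟨hpT, r, hrT, hrp, hne⟩ := Finset.mem_filter.1 hp
    exact hT.eq_of_snd_eq hpT hrT hq hrp hne hqp
  have hB_row : ∀ p ∈ B, ∀ q ∈ T, q.1 = p.1 → q = p := by
    simp only [B, Finset.mem_filter]
    grind
  have hAB_disj : ∀ p ∈ A, p ∉ B := fun p hpA hpB =>
    (Finset.mem_filter.1 hpB).2 (Finset.mem_filter.1 hpA).2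
  have hA_card : (A.image Prod.snd).card = A.card :=
    Finset.card_image_of_injOn fun p hp q hq h => hA_col q (by grind) p (by grind) h
  have hB_card : (B.image Prod.fst).card = B.card :=
    Finset.card_image_of_injOn fun p hp q hq h => hB_row q (by grind) p (by grind) h
  have hrows : Disjoint (A.image Prod.fst) (B.image Prod.fst) := by
    simp only [Finset.disjoint_left, Finset.mem_image]
    rintro _ ⟨p, hp, rfl⟩ ⟨q, hq, hpq⟩
    exact hAB_disj p hp (hB_row q hq p (by grind) hpq.symm ▸ hq)
  have hcols : Disjoint (A.image Prod.snd) (B.image Prod.snd) := by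
    simp only [Finset.disjoint_left, Finset.mem_image]
    rintro _ ⟨p, hp, rfl⟩ ⟨q, hq, hpq⟩
    exact hAB_disj p hp (hA_col p hp q (by grind) hpq ▸ hq)
  have hrows_le := (Finset.card_union_of_disjoint hrows).symm.trans_le (Finset.card_le_univ _)
  have hcols_le := (Finset.card_union_of_disjoint hcols).symm.trans_le (Finset.card_le_univ _)
  have hA_pos : 0 < A.card → 0 < (A.image Prod.fst).card := by simp [Finset.card_pos]
  have hB_pos : 0 < B.card → 0 < (B.image Prod.snd).card := by simp [Finset.card_pos]
  have hAB : A.card + B.card = T.card := Finset.card_filter_add_card_filter_not _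
  omega

theorem ncard_le (hS : S.IsLFree) (hα : 2 ≤ Fintype.card α) (hβ : 2 ≤ Fintype.card β) :
    S.ncard ≤ Fintype.card α + Fintype.card β - 2 := by
  obtain ⟨T, rfl⟩ := S.toFinite.exists_finset_coe
  exact (Set.ncard_coe_finset T).trans_le (hS.card_le hα hβ)

end Set.IsLFree

open Finset in
theorem exists_isLFree_ncard_eq (α β : Type*) [Fintype α] [Fintype β] [Nonempty α]
    [Nonempty β] :
    ∃ S : Set (α × β), S.IsLFree ∧ S.ncard = Fintype.card α + Fintype.card β - 2 := by
  classical
  obtain ⟨a₀⟩ := ‹Nonempty α›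
  obtain ⟨b₀⟩ := ‹Nonempty β›
  have hdisj : Disjoint ({a₀} ×ˢ univ.erase b₀) (univ.erase a₀ ×ˢ {b₀}) :=
    disjoint_product.2 (.inr (disjoint_singleton_right.2 (notMem_erase _ _)))
  refine ⟨↑(({a₀} ×ˢ univ.erase b₀) ∪ (univ.erase a₀ ×ˢ {b₀})), ?_, ?_⟩
  · intro a c b d
    simp only [coe_union, coe_product, coe_singleton, coe_erase, coe_univ, Set.mem_union,
      Set.mem_prod, Set.mem_singleton_iff, Set.mem_sdiff, Set.mem_univ, true_and]
    grind
  · rw [Set.ncard_coe_finset, card_union_of_disjoint hdisj, card_product, card_product,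
      card_singleton, card_singleton, card_erase_of_mem (mem_univ _),
      card_erase_of_mem (mem_univ _), card_univ, card_univ]
    have := Fintype.card_pos (α := α)
    have := Fintype.card_pos (α := β)
    omega

theorem SimpleGraph.isGPSet_rookGraph_iff {α β : Type*} {S : Set (α × β)} :
    (rookGraph α β).IsGPSet S ↔ S.IsLFree := by
  classical
  constructor
  · intro hS a c b d hab had hcd
    by_contra! hne
    have hrow : (rookGraph α β).Adj (a, b) (a, d) := by simp [hne.1]
    have hcol : (rookGraph α β).Adj (a, d) (c, d) := by simp [hne.2]
    let p : (rookGraph α β).Walk (a, b) (c, d) := .cons hrow (.cons hcol .nil)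
    have hp : p.length = (rookGraph α β).dist (a, b) (c, d) := by
      simp [p, rookGraph_dist, hne.1, hne.2]
    exact hS hab hcd had (by simp [hne.2]) (by simp [hne.1]) (by simp [hne.2.symm])
      p (p.isPath_of_length_eq_dist hp) hp (by simp [p])
  · rintro hS ⟨u₁, u₂⟩ ⟨v₁, v₂⟩ ⟨w₁, w₂⟩ hu hv hw huv huw hvw p - hp hwp
    have hsum := p.dist_add_dist_of_mem_support hp hwp
    simp only [rookGraph_dist] at hsum
    simp only [ne_eq, Prod.mk.injEq] at huv huw hvw
    -- `d(u, w) + d(w, v) = d(u, v) ≤ 2` puts `w` at a corner of the rectangle spanned by `u, v`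
    have hcorner : (w₁ = u₁ ∧ w₂ = v₂) ∨ (w₁ = v₁ ∧ w₂ = u₂) := by
      split_ifs at hsum <;> grind
    rcases hcorner with ⟨rfl, rfl⟩ | ⟨rfl, rfl⟩
    · rcases hS hu hw hv with h | h <;> simp_all
    · rcases hS hv hw hu with h | h <;> simp_all

/-- If `n₁, n₂ ≥ 2`, then `gp(K_{n₁} □ K_{n₂}) = n₁ + n₂ - 2`. -/
theorem gpNumber_boxProd_complete (n₁ n₂ : ℕ) (h₁ : 2 ≤ n₁) (h₂ : 2 ≤ n₂) :
    ((⊤ : SimpleGraph (Fin n₁)) □ (⊤ : SimpleGraph (Fin n₂))).gpNumber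
      = n₁ + n₂ - 2 := by
  have : Nonempty (Fin n₁) := ⟨⟨0, by omega⟩⟩
  have : Nonempty (Fin n₂) := ⟨⟨0, by omega⟩⟩
  obtain ⟨S, hS, hcard⟩ := exists_isLFree_ncard_eq (Fin n₁) (Fin n₂)
  rw [Fintype.card_fin, Fintype.card_fin] at hcard
  refine SimpleGraph.gpNumber_eq_of_isGPSet (SimpleGraph.isGPSet_rookGraph_iff.2 hS) hcard
    fun T hT => ?_
  simpa using (SimpleGraph.isGPSet_rookGraph_iff.1 hT).ncard_le (by simpa) (by simpa)
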